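/- arXiv:math/0607704 — 2 statements merged into one kernel-verified Lean document; each statement's English description precedes it below -/
import Mathlib

section
/- Suppose M satisfies: every matrix [[a,b],[0,d]] ∈ M has a < d; every matrix [[a,0],[c,d]] ∈ M has a ≤ d; and no matrix in M has bottom-right entry 0 (no matrix of the form [[a,b],[c,0]]). Then for every vector V = (v₁,v₂) with v₁, v₂ > 0, the sequence of maps ω ↦ N(Pₙ(ω)V) converges uniformly on S^ℕ. -/
open Matrix Filter Topology

/-- A 2×2 real matrix is nonnegative and column-allowable. -/
def ColAllowable (A : Matrix (Fin 2) (Fin 2) ℝ) : Prop :=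
  (∀ i j, 0 ≤ A i j) ∧ 0 < A 0 0 + A 1 0 ∧ 0 < A 0 1 + A 1 1

/-- `n(X) = x₁/(x₁+x₂)`. -/
noncomputable def nv (X : Fin 2 → ℝ) : ℝ := X 0 / (X 0 + X 1)

/-- The normalized vector `N(X)`. -/
noncomputable def Nv (X : Fin 2 → ℝ) : Fin 2 → ℝ := ![nv X, 1 - nv X]

/-- `Pₙ(ω) = M_{ω₁} M_{ω₂} ⋯ M_{ωₙ}`. -/
def Pprod {s : ℕ} (M : Fin s → Matrix (Fin 2) (Fin 2) ℝ) (ω : ℕ → Fin s) (n : ℕ) :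
    Matrix (Fin 2) (Fin 2) ℝ :=
  ((List.range n).map (fun i => M (ω i))).prod

namespace S12

/-- column sums -/
def colx (A : Matrix (Fin 2) (Fin 2) ℝ) : ℝ := A 0 0 + A 1 0
def coly (A : Matrix (Fin 2) (Fin 2) ℝ) : ℝ := A 0 1 + A 1 1

lemma colx_mul (P A : Matrix (Fin 2) (Fin 2) ℝ) :
    colx (P * A) = colx P * A 0 0 + coly P * A 1 0 := by
  simp [colx, coly, Matrix.mul_apply, Fin.sum_univ_two]; ring

lemma coly_mul (P A : Matrix (Fin 2) (Fin 2) ℝ) :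
    coly (P * A) = colx P * A 0 1 + coly P * A 1 1 := by
  simp [colx, coly, Matrix.mul_apply, Fin.sum_univ_two]; ring

lemma colx_one : colx (1 : Matrix (Fin 2) (Fin 2) ℝ) = 1 := by
  simp [colx, Matrix.one_apply]

lemma coly_one : coly (1 : Matrix (Fin 2) (Fin 2) ℝ) = 1 := by
  simp [coly, Matrix.one_apply]

variable {s : ℕ} (M : Fin s → Matrix (Fin 2) (Fin 2) ℝ)

lemma Pprod_zero (ω : ℕ → Fin s) : Pprod M ω 0 = 1 := by simp [Pprod]

lemma Pprod_succ (ω : ℕ → Fin s) (n : ℕ) :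
    Pprod M ω (n + 1) = Pprod M ω n * M (ω n) := by
  unfold Pprod
  rw [List.range_succ, List.map_append, List.prod_append]
  simp

lemma Pprod_succ' (ω : ℕ → Fin s) (n : ℕ) :
    Pprod M ω (n + 1) = M (ω 0) * Pprod M (fun i => ω (i + 1)) n := by
  unfold Pprod
  rw [List.range_succ_eq_map, List.map_cons, List.prod_cons, List.map_map]
  rfl

lemma Pprod_add (ω : ℕ → Fin s) (n m : ℕ) :
    Pprod M ω (n + m) = Pprod M ω n * Pprod M (fun i => ω (n + i)) m := by
  induction m with
  | zero => simp [Pprod_zero]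
  | succ m ih =>
      rw [← Nat.add_assoc, Pprod_succ, ih, Pprod_succ, Matrix.mul_assoc]

lemma Pprod_nonneg (hM : ∀ k, ColAllowable (M k)) (ω : ℕ → Fin s) (n : ℕ) :
    ∀ i j, 0 ≤ Pprod M ω n i j := by
  induction n with
  | zero =>
      intro i j
      rw [Pprod_zero]
      rcases eq_or_ne i j with h | h <;> simp [Matrix.one_apply, h]
  | succ n ih =>
      intro i j
      rw [Pprod_succ, Matrix.mul_apply, Fin.sum_univ_two]
      have h0 := (hM (ω n)).1
      have h1 := ih i 0
      have h2 := ih i 1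
      have h3 := h0 0 j
      have h4 := h0 1 j
      positivity

lemma mulVec0 (A : Matrix (Fin 2) (Fin 2) ℝ) (W : Fin 2 → ℝ) :
    A.mulVec W 0 = A 0 0 * W 0 + A 0 1 * W 1 := by
  simp [Matrix.mulVec, dotProduct, Fin.sum_univ_two]

lemma mulVec1 (A : Matrix (Fin 2) (Fin 2) ℝ) (W : Fin 2 → ℝ) :
    A.mulVec W 1 = A 1 0 * W 0 + A 1 1 * W 1 := by
  simp [Matrix.mulVec, dotProduct, Fin.sum_univ_two]

/-- The key per-letter polynomial inequality. -/
lemma core (a b c d B γ Ka q0 q1 x y δ : ℝ)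
    (ha : 0 ≤ a) (hb : 0 ≤ b) (hc : 0 ≤ c) (hd : 0 < d) (hB : 0 < B)
    (hγ : 0 ≤ γ)
    (hKa : Ka = (a + c) * B + b + d)
    (hq0 : q0 = (c * B + d) * d - δ)
    (hq1 : q1 = a * B * d + b * (c * B + d) + b * d - δ * B)
    (hA1 : γ * (Ka * b) ≤ q1)
    (hA2 : γ * (Ka * (b + d)) ≤ q0)
    (hx : 0 ≤ x) (hy : 0 < y) :
    δ * ((x * B + y) * y) * (x + y) ≤
      (((x * a + y * c) * B + (x * b + y * d)) * (x * b + y * d)) * ((x + y) - γ * y) := by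
  set Den : ℝ := ((x * a + y * c) * B + (x * b + y * d)) * (x * b + y * d) with hDen0
  set S : ℝ := b * (a * B + b) * x ^ 2 + q1 * (x * y) + q0 * y ^ 2 with hS
  have hiden : Den = δ * ((x * B + y) * y) + S := by
    rw [hDen0, hS, hq0, hq1]; ring
  have hDenle : Den ≤ (Ka * (x + y)) * (b * (x + y) + d * y) := by
    rw [hDen0, hKa]
    have e1 : (x * a + y * c) * B + (x * b + y * d) ≤ ((a + c) * B + b + d) * (x + y) := by
      nlinarith [mul_nonneg (mul_nonneg ha hB.le) hy.le, mul_nonneg (mul_nonneg hc hB.le) hx,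
        mul_nonneg hb hy.le, mul_nonneg hd.le hx]
    have e2 : x * b + y * d ≤ b * (x + y) + d * y := by nlinarith [mul_nonneg hb hy.le]
    have e3 : (0:ℝ) ≤ x * b + y * d := by positivity
    have e4 : (0:ℝ) ≤ (a + c) * B + b + d := by positivity
    calc ((x * a + y * c) * B + (x * b + y * d)) * (x * b + y * d)
        ≤ (((a + c) * B + b + d) * (x + y)) * (x * b + y * d) :=
          mul_le_mul_of_nonneg_right e1 e3
      _ ≤ (((a + c) * B + b + d) * (x + y)) * (b * (x + y) + d * y) := by
          apply mul_le_mul_of_nonneg_left e2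
          positivity
  have h2' : γ * y * Den ≤ γ * y * ((Ka * (x + y)) * (b * (x + y) + d * y)) := by
    apply mul_le_mul_of_nonneg_left hDenle (by positivity)
  have h3' : γ * y * ((Ka * (x + y)) * (b * (x + y) + d * y)) =
      (γ * (Ka * b)) * (x * y * (x + y)) + (γ * (Ka * (b + d))) * (y ^ 2 * (x + y)) := by ring
  have h4' : (γ * (Ka * b)) * (x * y * (x + y)) ≤ q1 * (x * y * (x + y)) :=
    mul_le_mul_of_nonneg_right hA1 (by positivity)
  have h5' : (γ * (Ka * (b + d))) * (y ^ 2 * (x + y)) ≤ q0 * (y ^ 2 * (x + y)) :=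
    mul_le_mul_of_nonneg_right hA2 (by positivity)
  have h6' : q1 * (x * y * (x + y)) + q0 * (y ^ 2 * (x + y)) ≤ (x + y) * S := by
    have e : (x + y) * S = q1 * (x * y * (x + y)) + q0 * (y ^ 2 * (x + y)) +
        (b * (a * B + b)) * (x ^ 2 * (x + y)) := by rw [hS]; ring
    have e2 : (0:ℝ) ≤ (b * (a * B + b)) * (x ^ 2 * (x + y)) := by positivity
    linarith
  have hfin : γ * y * Den ≤ (x + y) * S := by
    calc γ * y * Den ≤ γ * y * ((Ka * (x + y)) * (b * (x + y) + d * y)) := h2'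
      _ = (γ * (Ka * b)) * (x * y * (x + y)) + (γ * (Ka * (b + d))) * (y ^ 2 * (x + y)) := h3'
      _ ≤ q1 * (x * y * (x + y)) + q0 * (y ^ 2 * (x + y)) := by linarith
      _ ≤ (x + y) * S := h6'
  have hexp : Den * ((x + y) - γ * y) =
      δ * ((x * B + y) * y) * (x + y) + ((x + y) * S - γ * y * Den) := by
    rw [hiden]; ring
  linarith

end S12

set_option maxHeartbeats 2000000 in
theorem stmt12 (s : ℕ) (M : Fin s → Matrix (Fin 2) (Fin 2) ℝ)
    (hM : ∀ k, ColAllowable (M k))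
    (h1 : ∀ k, M k 1 0 = 0 → M k 0 0 < M k 1 1)
    (h2 : ∀ k, M k 0 1 = 0 → M k 0 0 ≤ M k 1 1)
    (h3 : ∀ k, M k 1 1 ≠ 0) :
    ∀ V : Fin 2 → ℝ, 0 < V 0 → 0 < V 1 →
      ∃ F : (ℕ → Fin s) → (Fin 2 → ℝ),
        TendstoUniformly (fun n ω => Nv ((Pprod M ω n).mulVec V)) F atTop := by
  intro V hV0 hV1
  rcases Nat.eq_zero_or_pos s with hs | hs
  · subst hs
    refine ⟨fun _ => 0, ?_⟩
    rw [Metric.tendstoUniformly_iff]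
    intro ε hε
    filter_upwards with n
    intro ω
    exact (ω 0).elim0
  have hne : Nonempty (Fin s) := ⟨⟨0, hs⟩⟩
  have hnn : ∀ k, ∀ i j, (0:ℝ) ≤ M k i j := fun k => (hM k).1
  have hd : ∀ k, (0:ℝ) < M k 1 1 := fun k => lt_of_le_of_ne (hnn k 1 1) (Ne.symm (h3 k))
  -- ### choice of B
  obtain ⟨B0, hB0⟩ := Finite.exists_le (fun k : Fin s =>
      M k 0 1 / M k 1 1 + (if M k 1 0 = 0 then M k 0 1 / (M k 1 1 - M k 0 0)
        else (M k 0 0 + M k 0 1) / M k 1 0))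
  set B : ℝ := max (max 1 (V 0 / V 1)) B0 with hBdef
  have hB1 : (1:ℝ) ≤ B := le_trans (le_max_left _ _) (le_max_left _ _)
  have hBpos : (0:ℝ) < B := lt_of_lt_of_le one_pos hB1
  have hBV : V 0 ≤ B * V 1 := by
    have h := le_trans (le_max_right 1 (V 0 / V 1)) (le_max_left _ B0)
    rw [div_le_iff₀ hV1] at h; linarith
  have hsnd : ∀ k, (0:ℝ) ≤ (if M k 1 0 = 0 then M k 0 1 / (M k 1 1 - M k 0 0)
      else (M k 0 0 + M k 0 1) / M k 1 0) := by
    intro k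
    split_ifs with hc
    · have ha := h1 k hc
      exact div_nonneg (hnn k 0 1) (by linarith)
    · have hcpos : 0 < M k 1 0 := lt_of_le_of_ne (hnn k 1 0) (Ne.symm hc)
      exact div_nonneg (by have := hnn k 0 0; have := hnn k 0 1; linarith) hcpos.le
  have hfst : ∀ k, (0:ℝ) ≤ M k 0 1 / M k 1 1 := fun k => div_nonneg (hnn k 0 1) (hd k).le
  have hTB : ∀ k, M k 0 1 / M k 1 1 + (if M k 1 0 = 0 then M k 0 1 / (M k 1 1 - M k 0 0)
      else (M k 0 0 + M k 0 1) / M k 1 0) ≤ B := fun k => le_trans (hB0 k) (le_max_right _ _)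
  have hBbd : ∀ k, M k 0 1 ≤ B * M k 1 1 := by
    intro k
    have h := hTB k
    have h2' := hsnd k
    have h3' : M k 0 1 / M k 1 1 ≤ B := by linarith
    rw [div_le_iff₀ (hd k)] at h3'; linarith [mul_comm B (M k 1 1)]
  have hBc0 : ∀ k, M k 1 0 = 0 → M k 0 0 * B + M k 0 1 ≤ M k 1 1 * B := by
    intro k hc
    have h := hTB k
    rw [if_pos hc] at h
    have h3' : M k 0 1 / (M k 1 1 - M k 0 0) ≤ B := by linarith [hfst k]
    have ha := h1 k hc
    rw [div_le_iff₀ (by linarith)] at h3'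
    nlinarith
  have hBcp : ∀ k, M k 1 0 ≠ 0 → M k 0 0 + M k 0 1 ≤ M k 1 0 * B := by
    intro k hc
    have h := hTB k
    rw [if_neg hc] at h
    have hcpos : 0 < M k 1 0 := lt_of_le_of_ne (hnn k 1 0) (Ne.symm hc)
    have h3' : (M k 0 0 + M k 0 1) / M k 1 0 ≤ B := by linarith [hfst k]
    rw [div_le_iff₀ hcpos] at h3'; linarith [mul_comm B (M k 1 0)]
  -- ### choice of C
  obtain ⟨C0, hC0⟩ := Finite.exists_le (fun k : Fin s =>
      M k 1 0 / M k 1 1 + (if M k 0 1 = 0 then 0 else M k 0 0 / M k 0 1))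
  set C : ℝ := max 0 C0 with hCdef
  have hCnn : (0:ℝ) ≤ C := le_max_left 0 C0
  have hCsnd : ∀ k, (0:ℝ) ≤ (if M k 0 1 = 0 then 0 else M k 0 0 / M k 0 1) := by
    intro k
    split_ifs with hb
    · exact le_refl 0
    · have hbpos : 0 < M k 0 1 := lt_of_le_of_ne (hnn k 0 1) (Ne.symm hb)
      exact div_nonneg (hnn k 0 0) hbpos.le
  have hCc : ∀ k, M k 1 0 ≤ C * M k 1 1 := by
    intro k
    have h := le_trans (hC0 k) (le_max_right 0 C0)
    have h2' := hCsnd k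
    have h3' : M k 1 0 / M k 1 1 ≤ C := by linarith
    rw [div_le_iff₀ (hd k)] at h3'; linarith [mul_comm C (M k 1 1)]
  have hCa : ∀ k, M k 0 1 ≠ 0 → M k 0 0 ≤ C * M k 0 1 := by
    intro k hb
    have h := le_trans (hC0 k) (le_max_right 0 C0)
    rw [if_neg hb] at h
    have hbpos : 0 < M k 0 1 := lt_of_le_of_ne (hnn k 0 1) (Ne.symm hb)
    have h3' : M k 0 0 / M k 0 1 ≤ C := by
      have := div_nonneg (hnn k 1 0) (hd k).le; linarith
    rw [div_le_iff₀ hbpos] at h3'; linarith [mul_comm C (M k 0 1)]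
  -- ### per-letter constants
  set δf : Fin s → ℝ := fun k => |M k 0 0 * M k 1 1 - M k 0 1 * M k 1 0| with hδf
  set Kaf : Fin s → ℝ := fun k => (M k 0 0 + M k 1 0) * B + M k 0 1 + M k 1 1 with hKaf
  set q0f : Fin s → ℝ := fun k => (M k 1 0 * B + M k 1 1) * M k 1 1 - δf k with hq0f
  set q1f : Fin s → ℝ := fun k => M k 0 0 * B * M k 1 1 + M k 0 1 * (M k 1 0 * B + M k 1 1)
      + M k 0 1 * M k 1 1 - δf k * B with hq1f
  have hKapos : ∀ k, 0 < Kaf k := by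
    intro k
    have hac := (hM k).2.1
    have := hnn k 0 1
    have := hd k
    have : 0 < (M k 0 0 + M k 1 0) * B := mul_pos hac hBpos
    rw [hKaf]; dsimp only; linarith
  have hq0pos : ∀ k, 0 < q0f k := by
    intro k
    rw [hq0f]
    dsimp only
    rw [sub_pos, hδf]
    dsimp only
    rw [abs_lt]
    constructor
    · -- lower bound : b*c < (c*B+d)*d + a*d
      have hbc := mul_le_mul_of_nonneg_right (hBbd k) (hnn k 1 0)
      nlinarith [hd k, mul_nonneg (hnn k 0 0) (hd k).le, sq_nonneg (M k 1 1)]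
    · rcases eq_or_ne (M k 1 0) 0 with hc | hc
      · have hlt := h1 k hc
        rw [hc]
        nlinarith [hd k, hnn k 0 0, hnn k 0 1]
      · have hcpos : 0 < M k 1 0 := lt_of_le_of_ne (hnn k 1 0) (Ne.symm hc)
        have := hBcp k hc
        nlinarith [hd k, mul_nonneg (hnn k 0 1) (hnn k 1 0), mul_nonneg (hnn k 0 1) (hd k).le,
          sq_nonneg (M k 1 1)]
  have hq1cases : ∀ k, q1f k = 2 * M k 0 1 * (M k 1 0 * B + M k 1 1) ∨
      q1f k = 2 * M k 1 1 * (M k 0 0 * B + M k 0 1) := by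
    intro k
    rw [hq1f, hδf]
    dsimp only
    rcases le_total (M k 0 1 * M k 1 0) (M k 0 0 * M k 1 1) with h | h
    · left
      rw [abs_of_nonneg (by linarith)]
      ring
    · right
      rw [abs_of_nonpos (by linarith)]
      ring
  have hq1nn : ∀ k, 0 ≤ q1f k := by
    intro k
    have hcBd : (0:ℝ) ≤ M k 1 0 * B + M k 1 1 := by
      have := mul_nonneg (hnn k 1 0) hBpos.le
      have := (hd k).le
      linarith
    have haBb : (0:ℝ) ≤ M k 0 0 * B + M k 0 1 := by
      have := mul_nonneg (hnn k 0 0) hBpos.le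
      have := hnn k 0 1
      linarith
    rcases hq1cases k with h | h <;> rw [h]
    · exact mul_nonneg (mul_nonneg (by norm_num) (hnn k 0 1)) hcBd
    · exact mul_nonneg (mul_nonneg (by norm_num) (hd k).le) haBb
  have hq1pos : ∀ k, M k 0 1 ≠ 0 → 0 < q1f k := by
    intro k hb
    have hbpos : 0 < M k 0 1 := lt_of_le_of_ne (hnn k 0 1) (Ne.symm hb)
    have hcBd : 0 < M k 1 0 * B + M k 1 1 := by nlinarith [hd k, mul_nonneg (hnn k 1 0) hBpos.le]
    have haBb : 0 < M k 0 0 * B + M k 0 1 := by nlinarith [mul_nonneg (hnn k 0 0) hBpos.le]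
    rcases hq1cases k with h | h <;> rw [h]
    · positivity
    · nlinarith [hd k]
  set γf : Fin s → ℝ := fun k => min 1 (min (q0f k / (Kaf k * (M k 0 1 + M k 1 1)))
      (if M k 0 1 = 0 then 1 else q1f k / (Kaf k * M k 0 1))) with hγf
  have hγfpos : ∀ k, 0 < γf k := by
    intro k
    rw [hγf]
    dsimp only
    have hbd : 0 < M k 0 1 + M k 1 1 := by nlinarith [hd k, hnn k 0 1]
    apply lt_min one_pos
    apply lt_min
    · exact div_pos (hq0pos k) (mul_pos (hKapos k) hbd)
    · split_ifs with hb
      · exact one_pos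
      · have hbpos : 0 < M k 0 1 := lt_of_le_of_ne (hnn k 0 1) (Ne.symm hb)
        exact div_pos (hq1pos k hb) (mul_pos (hKapos k) hbpos)
  have hγf1 : ∀ k, γf k ≤ 1 := fun k => min_le_left _ _
  have hγfA2 : ∀ k, γf k * (Kaf k * (M k 0 1 + M k 1 1)) ≤ q0f k := by
    intro k
    have hbd : 0 < M k 0 1 + M k 1 1 := by nlinarith [hd k, hnn k 0 1]
    have hle : γf k ≤ q0f k / (Kaf k * (M k 0 1 + M k 1 1)) :=
      le_trans (min_le_right _ _) (min_le_left _ _)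
    rw [le_div_iff₀ (mul_pos (hKapos k) hbd)] at hle
    exact hle
  have hγfA1 : ∀ k, γf k * (Kaf k * M k 0 1) ≤ q1f k := by
    intro k
    rcases eq_or_ne (M k 0 1) 0 with hb | hb
    · rw [hb, mul_zero, mul_zero]
      exact hq1nn k
    · have hbpos : 0 < M k 0 1 := lt_of_le_of_ne (hnn k 0 1) (Ne.symm hb)
      have hle : γf k ≤ q1f k / (Kaf k * M k 0 1) := by
        refine le_trans (min_le_right _ _) (le_trans (min_le_right _ _) ?_)
        rw [if_neg hb]
      rw [le_div_iff₀ (mul_pos (hKapos k) hbpos)] at hle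
      exact hle
  obtain ⟨k0, -, hk0⟩ := Finset.exists_min_image Finset.univ γf ⟨Classical.arbitrary _,
    Finset.mem_univ _⟩
  set γ : ℝ := γf k0 with hγdef
  have hγpos : 0 < γ := hγfpos k0
  have hγ1 : γ ≤ 1 := hγf1 k0
  have hγle : ∀ k, γ ≤ γf k := fun k => hk0 k (Finset.mem_univ k)
  -- ### the product π
  set π : ℕ → ℝ := fun n => ∏ j ∈ Finset.range n, (1 - γ / (2 + C * j)) with hπdef
  have hdenpos : ∀ j : ℕ, (0:ℝ) < 2 + C * j := by
    intro j
    have : (0:ℝ) ≤ C * j := mul_nonneg hCnn (Nat.cast_nonneg j)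
    linarith
  have hfacnn : ∀ j : ℕ, 0 ≤ 1 - γ / (2 + C * j) := by
    intro j
    have h : γ / (2 + C * j) ≤ 1 := by
      rw [div_le_one (hdenpos j)]
      have : (0:ℝ) ≤ C * j := mul_nonneg hCnn (Nat.cast_nonneg j)
      linarith
    linarith
  have hfacle1 : ∀ j : ℕ, 1 - γ / (2 + C * j) ≤ 1 := by
    intro j
    have : 0 ≤ γ / (2 + C * j) := div_nonneg hγpos.le (hdenpos j).le
    linarith
  have hπnn : ∀ n, 0 ≤ π n := by
    intro n
    exact Finset.prod_nonneg (fun j _ => hfacnn j)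
  have hπantitone : Antitone π := by
    apply antitone_nat_of_succ_le
    intro n
    rw [hπdef]
    dsimp only
    rw [Finset.prod_range_succ]
    nlinarith [hπnn n, hfacnn n, hfacle1 n]
  have hπ0 : Tendsto π atTop (𝓝 0) := by
    have hexp : ∀ n, π n ≤ Real.exp (-(∑ j ∈ Finset.range n, γ / (2 + C * j))) := by
      intro n
      have he : Real.exp (-(∑ j ∈ Finset.range n, γ / (2 + C * j))) =
          ∏ j ∈ Finset.range n, Real.exp (-(γ / (2 + C * j))) := by
        rw [← Real.exp_sum, ← Finset.sum_neg_distrib]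
      rw [hπdef, he]
      apply Finset.prod_le_prod (fun j _ => hfacnn j)
      intro j _
      have := Real.add_one_le_exp (-(γ / (2 + C * j)))
      linarith
    have hsum : Tendsto (fun n => ∑ j ∈ Finset.range n, γ / (2 + C * j)) atTop atTop := by
      have hc2 : (0:ℝ) < γ / (2 + C) := div_pos hγpos (by linarith)
      apply tendsto_atTop_mono ?_ (Tendsto.const_mul_atTop hc2
        Real.tendsto_sum_range_one_div_nat_succ_atTop)
      intro n
      rw [Finset.mul_sum]
      apply Finset.sum_le_sum
      intro j _
      have hj : (0:ℝ) ≤ (j:ℝ) := Nat.cast_nonneg j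
      have e1 : γ / (2 + C) * (1 / (j + 1)) = γ / ((2 + C) * (j + 1)) := by
        rw [div_mul_div_comm, mul_one]
      rw [e1]
      apply div_le_div_of_nonneg_left hγpos.le (hdenpos j)
      nlinarith
    have hexp0 : Tendsto (fun n => Real.exp (-(∑ j ∈ Finset.range n, γ / (2 + C * j))))
        atTop (𝓝 0) :=
      Real.tendsto_exp_atBot.comp (tendsto_neg_atBot_iff.mpr hsum)
    exact squeeze_zero hπnn hexp hexp0
  -- ### the main quantities
  set Δ : (ℕ → Fin s) → ℕ → ℝ := fun ω n =>
    |(Pprod M ω n).det| * B /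
      ((S12.colx (Pprod M ω n) * B + S12.coly (Pprod M ω n)) * S12.coly (Pprod M ω n)) with hΔdef
  set g : (ℕ → Fin s) → ℕ → ℝ := fun ω n => nv ((Pprod M ω n).mulVec V) with hgdef
  have claimA : ∀ (ω : ℕ → Fin s) (n : ℕ), 0 < S12.coly (Pprod M ω n) ∧
      0 ≤ S12.colx (Pprod M ω n) ∧
      S12.colx (Pprod M ω n) ≤ (1 + C * n) * S12.coly (Pprod M ω n) := by
    intro ω n
    induction n with
    | zero =>
        rw [S12.Pprod_zero, S12.colx_one, S12.coly_one]
        norm_num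
    | succ n ih =>
        obtain ⟨hy, hx, hxy⟩ := ih
        rw [S12.Pprod_succ, S12.colx_mul, S12.coly_mul]
        set k := ω n
        have ha := hnn k 0 0
        have hb := hnn k 0 1
        have hc := hnn k 1 0
        have hdk := hd k
        have hy' : 0 < S12.colx (Pprod M ω n) * M k 0 1 + S12.coly (Pprod M ω n) * M k 1 1 := by
          nlinarith
        refine ⟨hy', by nlinarith, ?_⟩
        push_cast
        rcases eq_or_ne (M k 0 1) 0 with hb0 | hb0
        · have had := h2 k hb0
          have hcC := hCc k
          rw [hb0]
          have hn0 : (0:ℝ) ≤ (n:ℝ) := Nat.cast_nonneg n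
          nlinarith [mul_nonneg (mul_nonneg hCnn hn0) (mul_pos hy hdk).le,
            mul_le_mul_of_nonneg_right hxy ha,
            mul_le_mul_of_nonneg_left had (by nlinarith : (0:ℝ) ≤ (1 + C * n) * S12.coly (Pprod M ω n)),
            mul_le_mul_of_nonneg_left hcC hy.le]
        · have haC := hCa k hb0
          have hcC := hCc k
          have hn0 : (0:ℝ) ≤ (n:ℝ) := Nat.cast_nonneg n
          nlinarith [mul_le_mul_of_nonneg_left haC hx, mul_le_mul_of_nonneg_left hcC hy.le,
            mul_nonneg (mul_nonneg hCnn hn0) hy'.le, hy'.le]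
  
  have claimW : ∀ (ω : ℕ → Fin s) (m : ℕ), 0 ≤ (Pprod M ω m).mulVec V 0 ∧
      0 < (Pprod M ω m).mulVec V 1 ∧
      (Pprod M ω m).mulVec V 0 ≤ B * (Pprod M ω m).mulVec V 1 := by
    intro ω m
    induction m generalizing ω with
    | zero =>
        rw [S12.Pprod_zero, Matrix.one_mulVec]
        exact ⟨hV0.le, hV1, hBV⟩
    | succ m ih =>
        obtain ⟨hW0, hW1, hWB⟩ := ih (fun i => ω (i + 1))
        rw [S12.Pprod_succ', ← Matrix.mulVec_mulVec]
        set k := ω 0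
        set W : Fin 2 → ℝ := (Pprod M (fun i => ω (i + 1)) m).mulVec V with hW
        rw [S12.mulVec0, S12.mulVec1]
        have ha := hnn k 0 0
        have hb := hnn k 0 1
        have hc := hnn k 1 0
        have hdk := hd k
        refine ⟨by nlinarith, by nlinarith, ?_⟩
        rcases eq_or_ne (M k 1 0) 0 with hc0 | hc0
        · have hab := hBc0 k hc0
          rw [hc0]
          nlinarith [mul_le_mul_of_nonneg_left hWB ha,
            mul_le_mul_of_nonneg_right hab hW1.le]
        · have hacB := hBcp k hc0
          have hbBd := hBbd k
          nlinarith [mul_le_mul_of_nonneg_right hacB hW0, mul_le_mul_of_nonneg_right hbBd hW1.le,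
            mul_nonneg hb hW0]
  
  have pivot : ∀ (ω : ℕ → Fin s) (n : ℕ) (W : Fin 2 → ℝ), 0 ≤ W 0 → 0 < W 1 → W 0 ≤ B * W 1 →
      |nv ((Pprod M ω n).mulVec W) - Pprod M ω n 0 1 / S12.coly (Pprod M ω n)| ≤ Δ ω n := by
    intro ω n W hW0 hW1 hWB
    obtain ⟨hy, hx, -⟩ := claimA ω n
    have hPnn := S12.Pprod_nonneg M hM ω n
    rw [hΔdef]
    dsimp only
    set P := Pprod M ω n with hPdef
    set x := S12.colx P with hxdef
    set y := S12.coly P with hydef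
    have hden : 0 < x * W 0 + y * W 1 := by nlinarith
    have hnv : nv (P.mulVec W) = (P 0 0 * W 0 + P 0 1 * W 1) / (x * W 0 + y * W 1) := by
      unfold nv
      rw [S12.mulVec0, S12.mulVec1, hxdef, hydef]
      simp only [S12.colx, S12.coly]
      congr 1
      ring
    have hdiff : (P 0 0 * W 0 + P 0 1 * W 1) / (x * W 0 + y * W 1) - P 0 1 / y
        = (W 0 * P.det) / ((x * W 0 + y * W 1) * y) := by
      rw [div_sub_div _ _ (ne_of_gt hden) (ne_of_gt hy), Matrix.det_fin_two]
      congr 1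
      rw [hxdef, hydef]
      simp only [S12.colx, S12.coly]
      ring
    have hxBy : 0 < (x * B + y) * y :=
      mul_pos (by nlinarith [mul_nonneg hx hBpos.le]) hy
    rw [hnv, hdiff, abs_div, abs_mul, abs_of_nonneg hW0, abs_of_pos (mul_pos hden hy)]
    rw [div_le_div_iff₀ (mul_pos hden hy) hxBy]
    nlinarith [abs_nonneg P.det,
      mul_nonneg (mul_nonneg (abs_nonneg P.det) (mul_pos hy hy).le) (sub_nonneg.2 hWB)]
  have stepΔ : ∀ ω n, Δ ω (n + 1) ≤ Δ ω n * (1 - γ / (2 + C * n)) := by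
    intro ω n
    obtain ⟨hy, hx, hxy⟩ := claimA ω n
    rw [hΔdef]
    dsimp only
    rw [S12.Pprod_succ M ω n, S12.colx_mul, S12.coly_mul, Matrix.det_mul, abs_mul]
    set k := ω n with hkdef
    set P := Pprod M ω n with hPdef
    set x := S12.colx P with hxdef
    set y := S12.coly P with hydef
    have ha := hnn k 0 0
    have hb := hnn k 0 1
    have hc := hnn k 1 0
    have hdk := hd k
    have hδnn : 0 ≤ |M k 0 0 * M k 1 1 - M k 0 1 * M k 1 0| := abs_nonneg _
    have hdetk : |(M k).det| = δf k := by rw [Matrix.det_fin_two, hδf]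
    rw [hdetk]
    have hy' : 0 < x * M k 0 1 + y * M k 1 1 := by nlinarith
    have hx' : 0 ≤ x * M k 0 0 + y * M k 1 0 := by nlinarith
    have hD1 : 0 < ((x * M k 0 0 + y * M k 1 0) * B + (x * M k 0 1 + y * M k 1 1)) *
        (x * M k 0 1 + y * M k 1 1) :=
      mul_pos (by nlinarith [mul_nonneg hx' hBpos.le]) hy'
    have hD0 : 0 < (x * B + y) * y :=
      mul_pos (by nlinarith [mul_nonneg hx hBpos.le]) hy
    have hxyp : 0 < x + y := by nlinarith
    have hcore := S12.core (M k 0 0) (M k 0 1) (M k 1 0) (M k 1 1) B (γf k) (Kaf k)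
      (q0f k) (q1f k) x y (δf k) ha hb hc hdk hBpos (hγfpos k).le
      (by rw [hKaf]) (by rw [hq0f]) (by rw [hq1f]) (hγfA1 k) (hγfA2 k) hx hy
    have hstep2 : (x + y) - γf k * y ≤ (1 - γ / (2 + C * n)) * (x + y) := by
      have hdp := hdenpos n
      have e1 : x + y ≤ (2 + C * n) * y := by nlinarith
      have e2 : γ / (2 + C * n) * (x + y) ≤ γ / (2 + C * n) * ((2 + C * n) * y) :=
        mul_le_mul_of_nonneg_left e1 (by positivity)
      have e3 : γ / (2 + C * n) * ((2 + C * n) * y) = γ * y := by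
        field_simp
      have e4 : γ * y ≤ γf k * y := mul_le_mul_of_nonneg_right (hγle k) hy.le
      nlinarith
    have h5 : δf k * ((x * B + y) * y) ≤
        (((x * M k 0 0 + y * M k 1 0) * B + (x * M k 0 1 + y * M k 1 1)) *
          (x * M k 0 1 + y * M k 1 1)) * (1 - γ / (2 + C * n)) := by
      have h4 : δf k * ((x * B + y) * y) * (x + y) ≤
          ((((x * M k 0 0 + y * M k 1 0) * B + (x * M k 0 1 + y * M k 1 1)) *
            (x * M k 0 1 + y * M k 1 1)) * (1 - γ / (2 + C * n))) * (x + y) := by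
        calc δf k * ((x * B + y) * y) * (x + y)
            ≤ (((x * M k 0 0 + y * M k 1 0) * B + (x * M k 0 1 + y * M k 1 1)) *
              (x * M k 0 1 + y * M k 1 1)) * ((x + y) - γf k * y) := hcore
          _ ≤ (((x * M k 0 0 + y * M k 1 0) * B + (x * M k 0 1 + y * M k 1 1)) *
              (x * M k 0 1 + y * M k 1 1)) * ((1 - γ / (2 + C * n)) * (x + y)) :=
              mul_le_mul_of_nonneg_left hstep2 hD1.le
          _ = ((((x * M k 0 0 + y * M k 1 0) * B + (x * M k 0 1 + y * M k 1 1)) *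
              (x * M k 0 1 + y * M k 1 1)) * (1 - γ / (2 + C * n))) * (x + y) := by ring
      exact le_of_mul_le_mul_right h4 hxyp
    have h6 := mul_le_mul_of_nonneg_left h5 (mul_nonneg (abs_nonneg P.det) hBpos.le)
    rw [div_le_iff₀ hD1, div_mul_eq_mul_div, div_mul_eq_mul_div, le_div_iff₀ hD0]
    nlinarith [h6]
  have Δbound : ∀ ω n, Δ ω n ≤ B * π n := by
    intro ω n
    induction n with
    | zero =>
        rw [hΔdef, hπdef]
        dsimp only
        rw [S12.Pprod_zero, S12.colx_one, S12.coly_one, Matrix.det_one, Finset.prod_range_zero]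
        rw [abs_one, one_mul, mul_one, mul_one]
        have h0 : (0:ℝ) < B + 1 := by linarith
        rw [div_le_iff₀ h0]
        nlinarith
    | succ n ih =>
        calc Δ ω (n + 1) ≤ Δ ω n * (1 - γ / (2 + C * n)) := stepΔ ω n
          _ ≤ (B * π n) * (1 - γ / (2 + C * n)) :=
              mul_le_mul_of_nonneg_right ih (hfacnn n)
          _ = B * π (n + 1) := by
              rw [hπdef]
              dsimp only
              rw [Finset.prod_range_succ]
              ring
  have hcau : ∀ ω n m, |g ω (n + m) - g ω n| ≤ 2 * (B * π n) := by
    intro ω n m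
    have hPQ : Pprod M ω (n + m) = Pprod M ω n * Pprod M (fun i => ω (n + i)) m :=
      S12.Pprod_add M ω n m
    have hmv : (Pprod M ω (n + m)).mulVec V =
        (Pprod M ω n).mulVec ((Pprod M (fun i => ω (n + i)) m).mulVec V) := by
      rw [hPQ, Matrix.mulVec_mulVec]
    obtain ⟨hW0, hW1, hWB⟩ := claimW (fun i => ω (n + i)) m
    have hp1 := pivot ω n ((Pprod M (fun i => ω (n + i)) m).mulVec V) hW0 hW1 hWB
    have hp2 := pivot ω n V hV0.le hV1 hBV
    have hΔπ := Δbound ω n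
    rw [hgdef]
    dsimp only
    rw [hmv]
    calc |nv ((Pprod M ω n).mulVec ((Pprod M (fun i => ω (n + i)) m).mulVec V)) -
          nv ((Pprod M ω n).mulVec V)|
        ≤ |nv ((Pprod M ω n).mulVec ((Pprod M (fun i => ω (n + i)) m).mulVec V)) -
            Pprod M ω n 0 1 / S12.coly (Pprod M ω n)| +
          |Pprod M ω n 0 1 / S12.coly (Pprod M ω n) - nv ((Pprod M ω n).mulVec V)| :=
          abs_sub_le _ _ _
      _ = |nv ((Pprod M ω n).mulVec ((Pprod M (fun i => ω (n + i)) m).mulVec V)) -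
            Pprod M ω n 0 1 / S12.coly (Pprod M ω n)| +
          |nv ((Pprod M ω n).mulVec V) - Pprod M ω n 0 1 / S12.coly (Pprod M ω n)| := by
          rw [abs_sub_comm (Pprod M ω n 0 1 / S12.coly (Pprod M ω n))]
      _ ≤ Δ ω n + Δ ω n := add_le_add hp1 hp2
      _ ≤ 2 * (B * π n) := by linarith
  have hlim : ∀ ω, ∃ l, Tendsto (g ω) atTop (𝓝 l) := by
    intro ω
    apply cauchySeq_tendsto_of_complete
    apply cauchySeq_of_le_tendsto_0 (fun N => 2 * (B * π N))
    · intro n m N hn hm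
      rcases le_total n m with h | h
      · obtain ⟨m', rfl⟩ := Nat.exists_eq_add_of_le h
        rw [Real.dist_eq, abs_sub_comm]
        exact le_trans (hcau ω n m') (by nlinarith [hπantitone hn, hπnn n, hπnn N])
      · obtain ⟨m', rfl⟩ := Nat.exists_eq_add_of_le h
        rw [Real.dist_eq]
        exact le_trans (hcau ω m m') (by nlinarith [hπantitone hm, hπnn m, hπnn N])
    · have : Tendsto (fun N => 2 * (B * π N)) atTop (𝓝 (2 * (B * 0))) :=
        (hπ0.const_mul B).const_mul 2
      simpa using this
  choose F0 hF0 using hlim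
  refine ⟨fun ω => ![F0 ω, 1 - F0 ω], ?_⟩
  rw [Metric.tendstoUniformly_iff]
  intro ε hε
  have hev : ∀ᶠ n in atTop, 2 * (B * π n) < ε := by
    have : Tendsto (fun N => 2 * (B * π N)) atTop (𝓝 (2 * (B * 0))) :=
      (hπ0.const_mul B).const_mul 2
    rw [mul_zero, mul_zero] at this
    exact this.eventually_lt_const hε
  filter_upwards [hev] with n hn ω
  have hFg : |F0 ω - g ω n| ≤ 2 * (B * π n) := by
    have haux : Tendsto (fun m => n + m) atTop atTop :=
      (tendsto_add_atTop_nat n).congr (fun m => by rw [Nat.add_comm])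
    have h1' : Tendsto (fun m => g ω (n + m)) atTop (𝓝 (F0 ω)) := (hF0 ω).comp haux
    have htend : Tendsto (fun m => |g ω (n + m) - g ω n|) atTop (𝓝 |F0 ω - g ω n|) :=
      ((h1'.sub_const _).abs)
    exact le_of_tendsto htend (Filter.Eventually.of_forall (fun m => hcau ω n m))
  rw [dist_pi_lt_iff hε]
  intro i
  have hgeq : Nv ((Pprod M ω n).mulVec V) = ![g ω n, 1 - g ω n] := by
    rw [hgdef]; rfl
  fin_cases i
  · simp only [hgeq]
    rw [Real.dist_eq]
    show |F0 ω - g ω n| < ε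
    exact lt_of_le_of_lt hFg hn
  · simp only [hgeq]
    rw [Real.dist_eq]
    show |1 - F0 ω - (1 - g ω n)| < ε
    rw [show (1 - F0 ω - (1 - g ω n)) = -(F0 ω - g ω n) by ring, abs_neg]
    exact lt_of_le_of_lt hFg hn
end

section
/- Let V = (v₁,v₂) with v₁, v₂ > 0. If the sequence of maps ω ↦ N(Pₙ(ω)V) converges uniformly on S^ℕ, then one of the following five cases holds. Case 1: every [[a,b],[0,d]] ∈ M has a ≥ d, every [[a,0],[c,d]] ∈ M has a ≤ d, whenever [[a,b],[c,0]] ∈ M and [[0,b'],[c',d']] ∈ M one has bc' ≥ b'c, and no matrix in M has the form [[a,0],[0,d]] or [[0,b],[c,0]]. Case 2: every [[a,b],[0,d]] ∈ M has a < d, every [[a,0],[c,d]] ∈ M has a > d, and whenever [[a,b],[c,0]] ∈ M and [[0,b'],[c',d']] ∈ M one has bc' < b'c. Case 3: every [[a,b],[0,d]] ∈ M has a ≥ d, every [[a,0],[c,d]] ∈ M has a > d, and no matrix in M has top-left entry 0. Case 4: every [[a,b],[0,d]] ∈ M has a < d, every [[a,0],[c,d]] ∈ M has a ≤ d, and no matrix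 in M has bottom-right entry 0. Case 5: V is an eigenvector of every matrix in M. -/
/-!
Put `τ = n(V)` and let `act A : t ↦ n(A (t, 1 - t))`, so that `n(P V) = act P τ` and the
projective action of column-allowable matrices becomes an action on `[0, 1]`. Uniform
convergence says that long products forget where the orbit of `τ` started. An upper triangular
word with `a₁₁ ≤ a₀₀` (and not scalar) drives `τ` to its fixed point `1`, while one with
`a₀₀ < a₁₁` fixes `1` but keeps the orbit of `τ` away from it; so once `1` is a limit point of the
orbit, no word may repel from `1`. The same holds at `0` for lower triangular words, a zero
top-left (bottom-right) entry sends `1` to `0` (`0` to `1`), and a matrix with zero bottom-right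
entry times one with zero top-left entry is upper triangular. Cases 1, 3, 4 and 2 arise according
as both, only `1`, only `0` or neither of `0, 1` are limit points of the orbit; scalar words are
excluded unless `V` is a common eigenvector.
-/

open Matrix Filter

open Set Topology
open scoped Pointwise

local notation "M₂" => Matrix (Fin 2) (Fin 2) ℝ

namespace ColAllowable

variable {A B : M₂}

theorem one : ColAllowable (1 : M₂) :=
  ⟨fun i j => by fin_cases i <;> fin_cases j <;> simp, by simp, by simp⟩

theorem colSum_mulVec_pos (hA : ColAllowable A) {X : Fin 2 → ℝ} (hX0 : 0 ≤ X 0)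
    (hX1 : 0 ≤ X 1) (hX : 0 < X 0 + X 1) : 0 < (A *ᵥ X) 0 + (A *ᵥ X) 1 := by
  obtain ⟨hnn, h0, h1⟩ := hA
  simp only [mulVec, dotProduct, Fin.sum_univ_two]
  rcases hX0.eq_or_lt with hx | hx
  · rw [← hx] at hX ⊢; nlinarith
  · nlinarith [hnn 0 1, hnn 1 1]

theorem mul (hA : ColAllowable A) (hB : ColAllowable B) : ColAllowable (A * B) := by
  refine ⟨fun i j => ?_, ?_, ?_⟩
  · simp only [Matrix.mul_apply, Fin.sum_univ_two]
    have := hA.1 i 0; have := hA.1 i 1; have := hB.1 0 j; have := hB.1 1 j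
    positivity
  · simpa [mulVec, dotProduct, Fin.sum_univ_two, Matrix.mul_apply] using
      hA.colSum_mulVec_pos (X := fun i => B i 0) (hB.1 0 0) (hB.1 1 0) hB.2.1
  · simpa [mulVec, dotProduct, Fin.sum_univ_two, Matrix.mul_apply] using
      hA.colSum_mulVec_pos (X := fun i => B i 1) (hB.1 0 1) (hB.1 1 1) hB.2.2

def submonoid : Submonoid M₂ where
  carrier := {A | ColAllowable A}
  mul_mem' := mul
  one_mem' := one

theorem pow (hA : ColAllowable A) (n : ℕ) : ColAllowable (A ^ n) :=
  submonoid.pow_mem hA n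

theorem of_mem_closure {G : Set M₂} (hG : ∀ A ∈ G, ColAllowable A)
    (hA : A ∈ Submonoid.closure G) : ColAllowable A :=
  (Submonoid.closure_le (S := submonoid)).2 hG hA

end ColAllowable

noncomputable def act (A : M₂) (t : ℝ) : ℝ := nv (A *ᵥ ![t, 1 - t])

def actDen (A : M₂) (t : ℝ) : ℝ := (A *ᵥ ![t, 1 - t]) 0 + (A *ᵥ ![t, 1 - t]) 1

theorem actDen_eq (A : M₂) (t : ℝ) :
    actDen A t = (A 0 0 + A 1 0) * t + (A 0 1 + A 1 1) * (1 - t) := by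
  simp only [actDen, mulVec, dotProduct, Fin.sum_univ_two, cons_val_zero, cons_val_one,
    cons_val_fin_one]
  ring

theorem act_eq_div (A : M₂) (t : ℝ) :
    act A t = (A 0 0 * t + A 0 1 * (1 - t)) / actDen A t := by
  simp [act, nv, actDen, mulVec, dotProduct, Fin.sum_univ_two]

theorem ColAllowable.actDen_pos {A : M₂} (hA : ColAllowable A) {t : ℝ} (ht : t ∈ Icc 0 1) :
    0 < actDen A t :=
  hA.colSum_mulVec_pos (by simpa using ht.1) (by simpa using ht.2) (by simp)

theorem nv_smul {c : ℝ} (hc : c ≠ 0) (X : Fin 2 → ℝ) : nv (c • X) = nv X := by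
  simp only [nv, Pi.smul_apply, smul_eq_mul, ← mul_add, mul_div_mul_left _ _ hc]

theorem Nv_eq_smul {X : Fin 2 → ℝ} (hX : X 0 + X 1 ≠ 0) : Nv X = (X 0 + X 1)⁻¹ • X := by
  ext i
  fin_cases i
  · simp [Nv, nv, div_eq_inv_mul]
  · simp only [Nv, nv, Fin.mk_one, cons_val_one, cons_val_fin_one, Pi.smul_apply, smul_eq_mul]
    field_simp
    ring

theorem nv_mulVec (A : M₂) {X : Fin 2 → ℝ} (hX : X 0 + X 1 ≠ 0) :
    nv (A *ᵥ X) = act A (nv X) := by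
  rw [act, ← Nv, Nv_eq_smul hX, mulVec_smul, nv_smul (inv_ne_zero hX)]

theorem act_mul (A : M₂) {B : M₂} {t : ℝ} (hB : actDen B t ≠ 0) :
    act (A * B) t = act A (act B t) := by
  rw [act, ← mulVec_mulVec, nv_mulVec A hB]
  rfl

theorem ColAllowable.act_mem_Icc {A : M₂} (hA : ColAllowable A) {t : ℝ} (ht : t ∈ Icc 0 1) :
    act A t ∈ Icc 0 1 := by
  have hden := hA.actDen_pos ht
  have hnum : 0 ≤ A 0 0 * t + A 0 1 * (1 - t) := by
    have := hA.1 0 0; have := hA.1 0 1; have := ht.1; have : 0 ≤ 1 - t := by linarith [ht.2]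
    positivity
  rw [act_eq_div]
  refine ⟨div_nonneg hnum hden.le, (div_le_one hden).2 ?_⟩
  rw [actDen_eq]
  nlinarith [hA.1 1 0, hA.1 1 1, ht.1, ht.2]

theorem continuousAt_act {A : M₂} {t : ℝ} (ht : actDen A t ≠ 0) : ContinuousAt (act A) t := by
  have : act A = fun t => (A 0 0 * t + A 0 1 * (1 - t)) / actDen A t := funext (act_eq_div A)
  rw [this]
  refine ContinuousAt.div (by fun_prop) ?_ ht
  rw [show actDen A = _ from funext (actDen_eq A)]
  fun_prop

theorem act_sub_act (A : M₂) {t₁ t₂ : ℝ} (h₁ : actDen A t₁ ≠ 0) (h₂ : actDen A t₂ ≠ 0) :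
    act A t₂ - act A t₁ = A.det * (t₂ - t₁) / (actDen A t₁ * actDen A t₂) := by
  rw [eq_div_iff (mul_ne_zero h₁ h₂), act_eq_div, act_eq_div]
  field_simp
  rw [det_fin_two, actDen_eq, actDen_eq]
  ring

theorem ColAllowable.act_pow {A : M₂} (hA : ColAllowable A) {t : ℝ} (ht : t ∈ Icc 0 1)
    (n : ℕ) : act (A ^ n) t = (act A)^[n] t := by
  induction n with
  | zero => simp [act, nv]
  | succ n ih =>
    rw [pow_succ', act_mul A ((hA.pow n).actDen_pos ht).ne', ih,
      Function.iterate_succ_apply']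

theorem act_smul_one {c : ℝ} (hc : c ≠ 0) (t : ℝ) : act (c • 1) t = t := by
  rw [act, smul_mulVec, one_mulVec, nv_smul hc]
  simp [nv]

theorem act_sub_self_of_upper {A : M₂} (h10 : A 1 0 = 0) {t : ℝ} (ht : actDen A t ≠ 0) :
    act A t - t = (1 - t) * (A 0 1 * (1 - t) + (A 0 0 - A 1 1) * t) / actDen A t := by
  rw [eq_div_iff ht, sub_mul, act_eq_div, div_mul_cancel₀ _ ht, actDen_eq, h10]
  ring

theorem ColAllowable.monotoneOn_act {A : M₂} (hA : ColAllowable A) (hdet : 0 ≤ A.det) :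
    MonotoneOn (act A) (Icc 0 1) := by
  intro x hx y hy hxy
  have hdx := hA.actDen_pos hx
  have hdy := hA.actDen_pos hy
  have := act_sub_act A hdx.ne' hdy.ne'
  have : 0 ≤ A.det * (y - x) / (actDen A x * actDen A y) := by
    have : 0 ≤ y - x := by linarith
    positivity
  linarith

theorem ColAllowable.le_act_of_upper {A : M₂} (hA : ColAllowable A) (h10 : A 1 0 = 0)
    (hle : A 1 1 ≤ A 0 0) {t : ℝ} (ht : t ∈ Icc 0 1) : t ≤ act A t := by
  have hd := hA.actDen_pos ht
  have : 0 ≤ (1 - t) * (A 0 1 * (1 - t) + (A 0 0 - A 1 1) * t) / actDen A t := by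
    have := hA.1 0 1; have := ht.1; have : 0 ≤ 1 - t := by linarith [ht.2]
    have : 0 ≤ A 0 0 - A 1 1 := by linarith
    positivity
  linarith [act_sub_self_of_upper h10 hd.ne']

theorem ColAllowable.eq_one_of_act_eq_self_of_upper {A : M₂} (hA : ColAllowable A)
    (h10 : A 1 0 = 0) (hle : A 1 1 ≤ A 0 0) (hA_ne : ¬(A 0 1 = 0 ∧ A 1 1 = A 0 0)) {t : ℝ}
    (ht : t ∈ Ioc 0 1) (hfix : act A t = t) : t = 1 := by
  by_contra ht1
  have ht1 : t < 1 := ht.2.lt_of_ne ht1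
  have hd := hA.actDen_pos (Ioc_subset_Icc_self ht)
  have hnum := act_sub_self_of_upper h10 hd.ne'
  rw [hfix, sub_self, eq_comm, div_eq_zero_iff, or_iff_left hd.ne', mul_eq_zero,
    or_iff_right (by linarith)] at hnum
  have h1 : 0 ≤ A 0 1 * (1 - t) := mul_nonneg (hA.1 0 1) (by linarith)
  have h2 : 0 ≤ (A 0 0 - A 1 1) * t := mul_nonneg (by linarith) ht.1.le
  refine hA_ne ⟨?_, ?_⟩
  · exact (mul_eq_zero.1 (by linarith : A 0 1 * (1 - t) = 0)).resolve_right (by linarith)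
  · linarith [(mul_eq_zero.1 (by linarith : (A 0 0 - A 1 1) * t = 0)).resolve_right ht.1.ne']

theorem ColAllowable.tendsto_act_pow_of_upper {A : M₂} (hA : ColAllowable A) (h10 : A 1 0 = 0)
    (hle : A 1 1 ≤ A 0 0) (hA_ne : ¬(A 0 1 = 0 ∧ A 1 1 = A 0 0)) {t : ℝ} (ht : t ∈ Ioc 0 1) :
    Tendsto (fun n => act (A ^ n) t) atTop (𝓝 1) := by
  have ht' : t ∈ Icc (0 : ℝ) 1 := Ioc_subset_Icc_self ht
  simp_rw [hA.act_pow ht']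
  have hx : ∀ n, (act A)^[n] t ∈ Icc 0 1 :=
    fun n => (MapsTo.iterate (fun _ hy => hA.act_mem_Icc hy) n) ht'
  have hmono : Monotone fun n => (act A)^[n] t := monotone_nat_of_le_succ fun n => by
    simpa only [Function.iterate_succ_apply'] using hA.le_act_of_upper h10 hle (hx n)
  have hbdd : BddAbove (range fun n => (act A)^[n] t) := ⟨1, by rintro _ ⟨n, rfl⟩; exact (hx n).2⟩
  have hlim := tendsto_atTop_ciSup hmono hbdd
  have hL : ⨆ n, (act A)^[n] t ∈ Ioc 0 1 :=
    ⟨ht.1.trans_le (le_ciSup hbdd 0), ciSup_le fun n => (hx n).2⟩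
  have hfix := isFixedPt_of_tendsto_iterate hlim
    (continuousAt_act (hA.actDen_pos (Ioc_subset_Icc_self hL)).ne')
  rwa [hA.eq_one_of_act_eq_self_of_upper h10 hle hA_ne hL hfix] at hlim

theorem ColAllowable.exists_act_pow_le_of_upper {A : M₂} (hA : ColAllowable A)
    (h10 : A 1 0 = 0) (hlt : A 0 0 < A 1 1) {t : ℝ} (ht : t ∈ Ico 0 1) :
    ∃ b < 1, ∀ n, act (A ^ n) t ≤ b := by
  have hgap : 0 < A 0 1 + (A 1 1 - A 0 0) := by linarith [hA.1 0 1]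
  -- `A 0 1 / (A 0 1 + (A 1 1 - A 0 0))` is the fixed point of `act A` other than `1`
  set b := max t (A 0 1 / (A 0 1 + (A 1 1 - A 0 0)))
  have hb1 : b < 1 := max_lt ht.2 ((div_lt_one hgap).2 (by linarith))
  have hb : b ∈ Icc (0 : ℝ) 1 := ⟨ht.1.trans (le_max_left _ _), hb1.le⟩
  have hd := hA.actDen_pos hb
  have hfix_le : act A b ≤ b := by
    have hr : A 0 1 ≤ b * (A 0 1 + (A 1 1 - A 0 0)) := (div_le_iff₀ hgap).1 (le_max_right _ _)
    have : (1 - b) * (A 0 1 * (1 - b) + (A 0 0 - A 1 1) * b) / actDen A b ≤ 0 :=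
      div_nonpos_of_nonpos_of_nonneg
        (mul_nonpos_of_nonneg_of_nonpos (by linarith) (by nlinarith)) hd.le
    linarith [act_sub_self_of_upper h10 hd.ne']
  have hmono := hA.monotoneOn_act (by rw [det_fin_two, h10]; nlinarith [hA.1 0 0, hA.1 1 1])
  have hmaps : MapsTo (act A) (Icc 0 b) (Icc 0 b) := fun x hx => by
    have hx' : x ∈ Icc (0 : ℝ) 1 := ⟨hx.1, hx.2.trans hb.2⟩
    exact ⟨(hA.act_mem_Icc hx').1, (hmono hx' hb hx.2).trans hfix_le⟩
  refine ⟨b, hb1, fun n => ?_⟩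
  rw [hA.act_pow (Ico_subset_Icc_self ht)]
  exact (hmaps.iterate n ⟨ht.1, le_max_left _ _⟩).2

noncomputable def revConj : M₂ ≃+* M₂ := reindexRingEquiv ℝ Fin.revPerm

@[simp] theorem revConj_apply (A : M₂) (i j : Fin 2) : revConj A i j = A i.rev j.rev := rfl

theorem ColAllowable.map_revConj {A : M₂} (hA : ColAllowable A) : ColAllowable (revConj A) := by
  refine ⟨fun i j => hA.1 _ _, ?_, ?_⟩ <;> simp <;> linarith [hA.2.1, hA.2.2]

theorem act_revConj {A : M₂} {t : ℝ} (ht : actDen A t ≠ 0) :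
    act (revConj A) (1 - t) = 1 - act A t := by
  have hrev : actDen (revConj A) (1 - t) = actDen A t := by
    simp only [actDen_eq, revConj_apply, Fin.rev_zero, Fin.reduceLast, Fin.reduceRev,
      sub_sub_cancel]
    ring
  rw [act_eq_div, act_eq_div, hrev, eq_sub_iff_add_eq, ← add_div, div_eq_one_iff_eq ht,
    actDen_eq]
  simp only [revConj_apply, Fin.rev_zero, Fin.reduceLast, Fin.reduceRev, sub_sub_cancel]
  ring

theorem ColAllowable.act_pow_eq_revConj {A : M₂} (hA : ColAllowable A) {t : ℝ}
    (ht : t ∈ Icc 0 1) (n : ℕ) : act (A ^ n) t = 1 - act (revConj A ^ n) (1 - t) := by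
  rw [← map_pow, act_revConj ((hA.pow n).actDen_pos ht).ne', sub_sub_cancel]

theorem ColAllowable.tendsto_act_pow_of_lower {A : M₂} (hA : ColAllowable A) (h01 : A 0 1 = 0)
    (hle : A 0 0 ≤ A 1 1) (hA_ne : ¬(A 1 0 = 0 ∧ A 0 0 = A 1 1)) {t : ℝ} (ht : t ∈ Ico 0 1) :
    Tendsto (fun n => act (A ^ n) t) atTop (𝓝 0) := by
  have h := hA.map_revConj.tendsto_act_pow_of_upper (by simpa using h01) (by simpa using hle)
    (by simpa using hA_ne) (t := 1 - t) ⟨by linarith [ht.2], by linarith [ht.1]⟩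
  simp_rw [hA.act_pow_eq_revConj (Ico_subset_Icc_self ht)]
  simpa using h.const_sub 1

theorem ColAllowable.exists_le_act_pow_of_lower {A : M₂} (hA : ColAllowable A)
    (h01 : A 0 1 = 0) (hlt : A 1 1 < A 0 0) {t : ℝ} (ht : t ∈ Ioc 0 1) :
    ∃ b > 0, ∀ n, b ≤ act (A ^ n) t := by
  obtain ⟨b, hb, hle⟩ := hA.map_revConj.exists_act_pow_le_of_upper (by simpa using h01)
    (by simpa using hlt) (t := 1 - t) ⟨by linarith [ht.2], by linarith [ht.1]⟩
  refine ⟨1 - b, by linarith, fun n => ?_⟩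
  rw [hA.act_pow_eq_revConj (Ioc_subset_Icc_self ht)]
  linarith [hle n]

theorem act_one_of_upper {A : M₂} (hA : ColAllowable A) (h10 : A 1 0 = 0) : act A 1 = 1 := by
  have : 0 < A 0 0 := by simpa [h10] using hA.2.1
  simp [act_eq_div, actDen_eq, h10, this.ne']

theorem act_zero_of_lower {A : M₂} (h01 : A 0 1 = 0) : act A 0 = 0 := by
  simp [act_eq_div, h01]

theorem act_one_of_topLeft {A : M₂} (h00 : A 0 0 = 0) : act A 1 = 0 := by
  simp [act_eq_div, h00]

theorem act_zero_of_bottomRight {A : M₂} (hA : ColAllowable A) (h11 : A 1 1 = 0) :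
    act A 0 = 1 := by
  have : 0 < A 0 1 := by simpa [h11] using hA.2.2
  simp [act_eq_div, actDen_eq, h11, this.ne']

theorem eq_smul_one_of_diagonal {A : M₂} (h01 : A 0 1 = 0) (h10 : A 1 0 = 0)
    (h11 : A 1 1 = A 0 0) : A = A 0 0 • 1 := by
  ext i j
  fin_cases i <;> fin_cases j <;> simp [h01, h10, h11]

noncomputable def actOrbit (G : Set M₂) (τ : ℝ) : Set ℝ :=
  (fun B => act B τ) '' Submonoid.closure G

/-- What uniform convergence of `ω ↦ N(Pₙ(ω)V)` gives for `G = {M₀, …, M_{s-1}}` and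
`τ = n(V)`: long products `A` from `G` forget the starting point `act B τ` of the orbit of `τ`. -/
structure Forgetful (G : Set M₂) (τ : ℝ) : Prop where
  colAllowable : ∀ A ∈ G, ColAllowable A
  mem_Ioo : τ ∈ Ioo 0 1
  forgets : ∀ ε > 0, ∀ᶠ n in atTop, ∀ A ∈ G ^ n, ∀ B ∈ Submonoid.closure G,
    |act A (act B τ) - act A τ| < ε

namespace Forgetful

variable {G : Set M₂} {τ : ℝ} {A : M₂} {m : ℕ}

theorem colAllowable_of_mem_closure (h : Forgetful G τ) (hA : A ∈ Submonoid.closure G) :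
    ColAllowable A :=
  .of_mem_closure h.colAllowable hA

theorem colAllowable_of_mem_pow (h : Forgetful G τ) (hA : A ∈ G ^ m) : ColAllowable A :=
  h.colAllowable_of_mem_closure (Submonoid.closure_pow_le (Submonoid.subset_closure hA))

theorem closure_actOrbit_subset (h : Forgetful G τ) : closure (actOrbit G τ) ⊆ Icc 0 1 := by
  refine closure_minimal ?_ isClosed_Icc
  rintro _ ⟨B, hB, rfl⟩
  exact (h.colAllowable_of_mem_closure hB).act_mem_Icc (Ioo_subset_Icc_self h.mem_Ioo)

theorem act_mem_closure_actOrbit (h : Forgetful G τ) (hA : A ∈ G) {x : ℝ}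
    (hx : x ∈ closure (actOrbit G τ)) : act A x ∈ closure (actOrbit G τ) := by
  have hcont : ContinuousWithinAt (act A) (actOrbit G τ) x :=
    (continuousAt_act ((h.colAllowable A hA).actDen_pos
      (h.closure_actOrbit_subset hx)).ne').continuousWithinAt
  refine closure_mono ?_ (hcont.mem_closure_image hx)
  rintro _ ⟨_, ⟨B, hB, rfl⟩, rfl⟩
  refine ⟨A * B, mul_mem (Submonoid.subset_closure hA) hB, act_mul A ?_⟩
  exact ((h.colAllowable_of_mem_closure hB).actDen_pos (Ioo_subset_Icc_self h.mem_Ioo)).ne'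

/-- A long power of `A` must bring the orbit point `x` close to `τ`. -/
theorem false_of_separated (h : Forgetful G τ) {x : ℝ} (hx : x ∈ closure (actOrbit G τ))
    (hA : A ∈ G ^ m) (hm : m ≠ 0) {c : ℝ} (hc : 0 < c)
    (hsep : ∀ n, c ≤ |act (A ^ n) x - act (A ^ n) τ|) : False := by
  obtain ⟨N, hN⟩ := eventually_atTop.1 (h.forgets _ (half_pos hc))
  have hAN : A ^ N ∈ G ^ (m * N) := pow_mul G m N ▸ Set.pow_mem_pow hA
  have hsmall := hN _ (Nat.le_mul_of_pos_left N (Nat.pos_of_ne_zero hm)) _ hAN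
  have hcont : ContinuousWithinAt (fun y => |act (A ^ N) y - act (A ^ N) τ|) (actOrbit G τ) x :=
    ((continuousAt_act ((h.colAllowable_of_mem_pow hAN).actDen_pos
      (h.closure_actOrbit_subset hx)).ne').sub continuousAt_const).abs.continuousWithinAt
  have := hcont.closure_le hx continuousWithinAt_const (g := fun _ => c / 2)
    (by rintro _ ⟨B, hB, rfl⟩; exact (hsmall B hB).le)
  linarith [hsep N]

theorem false_of_eq_smul_one (h : Forgetful G τ) (hmove : ∃ A ∈ G, act A τ ≠ τ)
    (hA : A ∈ G ^ m) (hm : m ≠ 0) {c : ℝ} (hc : c ≠ 0) (hAc : A = c • 1) : False := by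
  obtain ⟨A₀, hA₀, hne⟩ := hmove
  refine h.false_of_separated (subset_closure ⟨A₀, Submonoid.subset_closure hA₀, rfl⟩) hA hm
    (abs_pos.2 (sub_ne_zero.2 hne)) fun n => ?_
  rw [hAc, smul_pow, one_pow, act_smul_one (pow_ne_zero n hc), act_smul_one (pow_ne_zero n hc)]

theorem one_mem_closure_actOrbit (h : Forgetful G τ) (hA : A ∈ G ^ m) (h10 : A 1 0 = 0)
    (hle : A 1 1 ≤ A 0 0) (hA_ne : ¬(A 0 1 = 0 ∧ A 1 1 = A 0 0)) :
    (1 : ℝ) ∈ closure (actOrbit G τ) :=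
  mem_closure_of_tendsto ((h.colAllowable_of_mem_pow hA).tendsto_act_pow_of_upper h10 hle hA_ne
    (Ioo_subset_Ioc_self h.mem_Ioo)) (Eventually.of_forall fun n =>
      ⟨A ^ n, pow_mem (Submonoid.closure_pow_le (Submonoid.subset_closure hA)) n, rfl⟩)

theorem zero_mem_closure_actOrbit (h : Forgetful G τ) (hA : A ∈ G ^ m) (h01 : A 0 1 = 0)
    (hle : A 0 0 ≤ A 1 1) (hA_ne : ¬(A 1 0 = 0 ∧ A 0 0 = A 1 1)) :
    (0 : ℝ) ∈ closure (actOrbit G τ) :=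
  mem_closure_of_tendsto ((h.colAllowable_of_mem_pow hA).tendsto_act_pow_of_lower h01 hle hA_ne
    (Ioo_subset_Ico_self h.mem_Ioo)) (Eventually.of_forall fun n =>
      ⟨A ^ n, pow_mem (Submonoid.closure_pow_le (Submonoid.subset_closure hA)) n, rfl⟩)

theorem upper_le_of_one_mem (h : Forgetful G τ) (h1 : (1 : ℝ) ∈ closure (actOrbit G τ))
    (hA : A ∈ G ^ m) (hm : m ≠ 0) (h10 : A 1 0 = 0) : A 1 1 ≤ A 0 0 := by
  by_contra! hlt
  have hcol := h.colAllowable_of_mem_pow hA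
  obtain ⟨b, hb, hle⟩ := hcol.exists_act_pow_le_of_upper h10 hlt (Ioo_subset_Ico_self h.mem_Ioo)
  refine h.false_of_separated h1 hA hm (sub_pos.2 hb) fun n => ?_
  rw [hcol.act_pow (right_mem_Icc.2 zero_le_one),
    Function.iterate_fixed (act_one_of_upper hcol h10), abs_of_nonneg (by linarith [hle n])]
  linarith [hle n]

theorem lower_le_of_zero_mem (h : Forgetful G τ) (h0 : (0 : ℝ) ∈ closure (actOrbit G τ))
    (hA : A ∈ G ^ m) (hm : m ≠ 0) (h01 : A 0 1 = 0) : A 0 0 ≤ A 1 1 := by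
  by_contra! hlt
  have hcol := h.colAllowable_of_mem_pow hA
  obtain ⟨b, hb, hle⟩ := hcol.exists_le_act_pow_of_lower h01 hlt (Ioo_subset_Ioc_self h.mem_Ioo)
  refine h.false_of_separated h0 hA hm hb fun n => ?_
  rw [hcol.act_pow (left_mem_Icc.2 zero_le_one), Function.iterate_fixed (act_zero_of_lower h01),
    zero_sub, abs_neg, abs_of_nonneg (by linarith [hle n])]
  exact hle n

theorem upper_lt_of_one_notMem (h : Forgetful G τ) (hmove : ∃ A ∈ G, act A τ ≠ τ)
    (h1 : (1 : ℝ) ∉ closure (actOrbit G τ)) (hA : A ∈ G ^ m) (hm : m ≠ 0) (h10 : A 1 0 = 0) :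
    A 0 0 < A 1 1 := by
  by_contra! hle
  by_cases hdiag : A 0 1 = 0 ∧ A 1 1 = A 0 0
  · have : 0 < A 0 0 := by simpa [h10] using (h.colAllowable_of_mem_pow hA).2.1
    exact h.false_of_eq_smul_one hmove hA hm this.ne'
      (eq_smul_one_of_diagonal hdiag.1 h10 hdiag.2)
  · exact h1 (h.one_mem_closure_actOrbit hA h10 hle hdiag)

theorem lower_lt_of_zero_notMem (h : Forgetful G τ) (hmove : ∃ A ∈ G, act A τ ≠ τ)
    (h0 : (0 : ℝ) ∉ closure (actOrbit G τ)) (hA : A ∈ G ^ m) (hm : m ≠ 0) (h01 : A 0 1 = 0) :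
    A 1 1 < A 0 0 := by
  by_contra! hle
  by_cases hdiag : A 1 0 = 0 ∧ A 0 0 = A 1 1
  · have : 0 < A 0 0 := by simpa [hdiag.1] using (h.colAllowable_of_mem_pow hA).2.1
    exact h.false_of_eq_smul_one hmove hA hm this.ne'
      (eq_smul_one_of_diagonal h01 hdiag.1 hdiag.2.symm)
  · exact h0 (h.zero_mem_closure_actOrbit hA h01 hle hdiag)

theorem topLeft_ne_zero (h : Forgetful G τ) (h1 : (1 : ℝ) ∈ closure (actOrbit G τ))
    (h0 : (0 : ℝ) ∉ closure (actOrbit G τ)) (hA : A ∈ G) : A 0 0 ≠ 0 := fun h00 =>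
  h0 (act_one_of_topLeft h00 ▸ h.act_mem_closure_actOrbit hA h1)

theorem bottomRight_ne_zero (h : Forgetful G τ) (h0 : (0 : ℝ) ∈ closure (actOrbit G τ))
    (h1 : (1 : ℝ) ∉ closure (actOrbit G τ)) (hA : A ∈ G) : A 1 1 ≠ 0 := fun h11 =>
  h1 (act_zero_of_bottomRight (h.colAllowable A hA) h11 ▸ h.act_mem_closure_actOrbit hA h0)

theorem not_diagonal (h : Forgetful G τ) (hmove : ∃ A ∈ G, act A τ ≠ τ)
    (h1 : (1 : ℝ) ∈ closure (actOrbit G τ)) (h0 : (0 : ℝ) ∈ closure (actOrbit G τ))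
    (hA : A ∈ G) : ¬(A 0 1 = 0 ∧ A 1 0 = 0) := by
  rintro ⟨h01, h10⟩
  have hA' : A ∈ G ^ 1 := by rwa [pow_one]
  have : 0 < A 0 0 := by simpa [h10] using (h.colAllowable A hA).2.1
  exact h.false_of_eq_smul_one hmove hA' one_ne_zero this.ne' (eq_smul_one_of_diagonal h01 h10
    ((h.upper_le_of_one_mem h1 hA' one_ne_zero h10).antisymm
      (h.lower_le_of_zero_mem h0 hA' one_ne_zero h01)))

/-- An antidiagonal matrix squares to a scalar one. -/
theorem not_antidiagonal (h : Forgetful G τ) (hmove : ∃ A ∈ G, act A τ ≠ τ) (hA : A ∈ G) :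
    ¬(A 0 0 = 0 ∧ A 1 1 = 0) := by
  rintro ⟨h00, h11⟩
  have hcol := h.colAllowable A hA
  have h01 : 0 < A 0 1 := by simpa [h11] using hcol.2.2
  have h10 : 0 < A 1 0 := by simpa [h00] using hcol.2.1
  refine h.false_of_eq_smul_one hmove (m := 2) (pow_two G ▸ Set.mul_mem_mul hA hA) two_ne_zero
    (mul_pos h01 h10).ne' ?_
  ext i j
  fin_cases i <;> fin_cases j <;> simp [Matrix.mul_apply, h00, h11, mul_comm]

theorem mul_entries_of_bottomRight_topLeft_eq_zero {A B : M₂} (hA : A 1 1 = 0) (hB : B 0 0 = 0) :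
    (A * B) 1 0 = 0 ∧ (A * B) 0 0 = A 0 1 * B 1 0 ∧ (A * B) 1 1 = A 1 0 * B 0 1 := by
  simp [Matrix.mul_apply, hA, hB]

theorem cross_le_of_one_mem (h : Forgetful G τ) (h1 : (1 : ℝ) ∈ closure (actOrbit G τ))
    {B : M₂} (hA : A ∈ G) (hB : B ∈ G) (hA11 : A 1 1 = 0) (hB00 : B 0 0 = 0) :
    B 0 1 * A 1 0 ≤ A 0 1 * B 1 0 := by
  obtain ⟨h10, h00, h11⟩ := mul_entries_of_bottomRight_topLeft_eq_zero hA11 hB00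
  have := h.upper_le_of_one_mem h1 (m := 2) (pow_two G ▸ Set.mul_mem_mul hA hB) two_ne_zero h10
  rwa [h00, h11, mul_comm] at this

theorem cross_lt_of_one_notMem (h : Forgetful G τ) (hmove : ∃ A ∈ G, act A τ ≠ τ)
    (h1 : (1 : ℝ) ∉ closure (actOrbit G τ))
    {B : M₂} (hA : A ∈ G) (hB : B ∈ G) (hA11 : A 1 1 = 0) (hB00 : B 0 0 = 0) :
    A 0 1 * B 1 0 < B 0 1 * A 1 0 := by
  obtain ⟨h10, h00, h11⟩ := mul_entries_of_bottomRight_topLeft_eq_zero hA11 hB00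
  have := h.upper_lt_of_one_notMem hmove h1 (m := 2) (pow_two G ▸ Set.mul_mem_mul hA hB)
    two_ne_zero h10
  rwa [h00, h11, mul_comm (A 1 0)] at this

end Forgetful

theorem eq_smul_of_nv_eq {X Y : Fin 2 → ℝ} (hX : X 0 + X 1 ≠ 0) (hY : Y 0 + Y 1 ≠ 0)
    (h : nv X = nv Y) : X = ((X 0 + X 1) / (Y 0 + Y 1)) • Y :=
  calc X = (X 0 + X 1) • Nv X := by rw [Nv_eq_smul hX, smul_smul, mul_inv_cancel₀ hX, one_smul]
    _ = (X 0 + X 1) • Nv Y := by rw [Nv, Nv, h]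
    _ = ((X 0 + X 1) / (Y 0 + Y 1)) • Y := by rw [Nv_eq_smul hY, smul_smul, div_eq_mul_inv]

theorem act_ne_of_not_eigenvector {A : M₂} (hA : ColAllowable A) {V : Fin 2 → ℝ}
    (hV0 : 0 < V 0) (hV1 : 0 < V 1) (hAV : ¬∃ ρ : ℝ, A *ᵥ V = ρ • V) :
    act A (nv V) ≠ nv V := by
  have hV : V 0 + V 1 ≠ 0 := by positivity
  refine fun hfix => hAV ⟨_, eq_smul_of_nv_eq ?_ hV ?_⟩
  · exact (hA.colSum_mulVec_pos hV0.le hV1.le (by positivity)).ne'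
  · rw [nv_mulVec _ hV, hfix]

section Products

variable {s : ℕ} (M : Fin s → M₂)

theorem Pprod_succ (ω : ℕ → Fin s) (n : ℕ) :
    Pprod M ω (n + 1) = M (ω 0) * Pprod M (fun i => ω (i + 1)) n := by
  simp [Pprod, List.range_succ_eq_map, Function.comp_def]

theorem Pprod_cons (k : Fin s) (ω : ℕ → Fin s) (n : ℕ) :
    Pprod M (fun i => if i = 0 then k else ω (i - 1)) (n + 1) = M k * Pprod M ω n := by
  simp [Pprod_succ]

theorem exists_Pprod_eq [Nonempty (Fin s)] {B : M₂} (hB : B ∈ Submonoid.closure (range M)) :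
    ∃ m ω, Pprod M ω m = B := by
  induction hB using Submonoid.closure_induction_left with
  | one => exact ⟨0, fun _ => Classical.arbitrary _, rfl⟩
  | mul_left _ hx _ _ ih =>
    obtain ⟨k, rfl⟩ := hx
    obtain ⟨m, ω, hω⟩ := ih
    exact ⟨m + 1, _, by rw [Pprod_cons, hω]⟩

theorem exists_Pprod_eq_mul [Nonempty (Fin s)] {n : ℕ} {A B : M₂} (hA : A ∈ range M ^ n)
    (hB : B ∈ Submonoid.closure (range M)) :
    ∃ m ω, Pprod M ω n = A ∧ Pprod M ω (n + m) = A * B := by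
  induction n generalizing A with
  | zero =>
    obtain ⟨m, ω, hω⟩ := exists_Pprod_eq M hB
    rw [pow_zero, Set.mem_one] at hA
    exact ⟨m, ω, by simp [hA, Pprod], by simp [hA, hω]⟩
  | succ n ih =>
    rw [pow_succ', Set.mem_mul] at hA
    obtain ⟨_, ⟨k, rfl⟩, A', hA', rfl⟩ := hA
    obtain ⟨m, ω, hω, hωm⟩ := ih hA'
    refine ⟨m, _, by rw [Pprod_cons, hω], ?_⟩
    rw [add_right_comm, Pprod_cons, hωm, mul_assoc]

theorem forgetful_of_tendstoUniformly [Nonempty (Fin s)] (hM : ∀ k, ColAllowable (M k))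
    {V : Fin 2 → ℝ} (hV0 : 0 < V 0) (hV1 : 0 < V 1) {F : (ℕ → Fin s) → (Fin 2 → ℝ)}
    (h : TendstoUniformly (fun n ω => Nv ((Pprod M ω n).mulVec V)) F atTop) :
    Forgetful (range M) (nv V) where
  colAllowable := by rintro _ ⟨k, rfl⟩; exact hM k
  mem_Ioo := ⟨div_pos hV0 (by linarith), (div_lt_one (by linarith)).2 (by linarith)⟩
  forgets ε hε := by
    obtain ⟨N, hN⟩ := eventually_atTop.1 (Metric.tendstoUniformly_iff.1 h _ (half_pos hε))
    refine eventually_atTop.2 ⟨N, fun n hn A hA B hB => ?_⟩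
    obtain ⟨m, ω, hωA, hωAB⟩ := exists_Pprod_eq_mul M hA hB
    have hV : V 0 + V 1 ≠ 0 := by positivity
    have hBV : (B *ᵥ V) 0 + (B *ᵥ V) 1 ≠ 0 :=
      ((ColAllowable.of_mem_closure (by rintro _ ⟨k, rfl⟩; exact hM k) hB).colSum_mulVec_pos
        hV0.le hV1.le (by positivity)).ne'
    have hAB : act A (act B (nv V)) = Nv (Pprod M ω (n + m) *ᵥ V) 0 := by
      rw [hωAB, ← mulVec_mulVec, Nv, nv_mulVec A hBV, nv_mulVec B hV]; rfl
    have hA : act A (nv V) = Nv (Pprod M ω n *ᵥ V) 0 := by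
      rw [hωA, Nv, nv_mulVec A hV]; rfl
    rw [hAB, hA, ← Real.dist_eq]
    calc _ ≤ dist (Nv (Pprod M ω (n + m) *ᵥ V)) (Nv (Pprod M ω n *ᵥ V)) := dist_le_pi_dist _ _ 0
      _ ≤ dist (F ω) (Nv (Pprod M ω (n + m) *ᵥ V)) + dist (F ω) (Nv (Pprod M ω n *ᵥ V)) :=
        dist_triangle_left _ _ _
      _ < ε / 2 + ε / 2 := add_lt_add (hN _ (hn.trans (Nat.le_add_right n m)) ω) (hN n hn ω)
      _ = ε := add_halves ε

end Products

theorem stmt13 (s : ℕ) (M : Fin s → Matrix (Fin 2) (Fin 2) ℝ)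
    (hM : ∀ k, ColAllowable (M k))
    (V : Fin 2 → ℝ) (hV0 : 0 < V 0) (hV1 : 0 < V 1)
    (F : (ℕ → Fin s) → (Fin 2 → ℝ))
    (h : TendstoUniformly (fun n ω => Nv ((Pprod M ω n).mulVec V)) F atTop) :
    -- Case 1
    ((∀ k, M k 1 0 = 0 → M k 1 1 ≤ M k 0 0) ∧
     (∀ k, M k 0 1 = 0 → M k 0 0 ≤ M k 1 1) ∧
     (∀ k l, M k 1 1 = 0 → M l 0 0 = 0 →
       M l 0 1 * M k 1 0 ≤ M k 0 1 * M l 1 0) ∧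
     (∀ k, ¬(M k 0 1 = 0 ∧ M k 1 0 = 0)) ∧
     (∀ k, ¬(M k 0 0 = 0 ∧ M k 1 1 = 0))) ∨
    -- Case 2
    ((∀ k, M k 1 0 = 0 → M k 0 0 < M k 1 1) ∧
     (∀ k, M k 0 1 = 0 → M k 1 1 < M k 0 0) ∧
     (∀ k l, M k 1 1 = 0 → M l 0 0 = 0 →
       M k 0 1 * M l 1 0 < M l 0 1 * M k 1 0)) ∨
    -- Case 3
    ((∀ k, M k 1 0 = 0 → M k 1 1 ≤ M k 0 0) ∧
     (∀ k, M k 0 1 = 0 → M k 1 1 < M k 0 0) ∧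
     (∀ k, M k 0 0 ≠ 0)) ∨
    -- Case 4
    ((∀ k, M k 1 0 = 0 → M k 0 0 < M k 1 1) ∧
     (∀ k, M k 0 1 = 0 → M k 0 0 ≤ M k 1 1) ∧
     (∀ k, M k 1 1 ≠ 0)) ∨
    -- Case 5
    (∀ k, ∃ ρ : ℝ, (M k).mulVec V = ρ • V) := by
  by_cases h5 : ∀ k, ∃ ρ : ℝ, (M k).mulVec V = ρ • V
  · exact Or.inr (Or.inr (Or.inr (Or.inr h5)))
  obtain ⟨k₀, hk₀⟩ := not_forall.1 h5
  have : Nonempty (Fin s) := ⟨k₀⟩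
  have hF := forgetful_of_tendstoUniformly M hM hV0 hV1 h
  have hmove : ∃ A ∈ range M, act A (nv V) ≠ nv V :=
    ⟨M k₀, mem_range_self k₀, act_ne_of_not_eigenvector (hM k₀) hV0 hV1 hk₀⟩
  have hG : ∀ k, M k ∈ range M ^ 1 := fun k => by simp
  by_cases h1 : (1 : ℝ) ∈ closure (actOrbit (range M) (nv V)) <;>
    by_cases h0 : (0 : ℝ) ∈ closure (actOrbit (range M) (nv V))
  · exact Or.inl ⟨fun k => hF.upper_le_of_one_mem h1 (hG k) one_ne_zero,
      fun k => hF.lower_le_of_zero_mem h0 (hG k) one_ne_zero,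
      fun k l => hF.cross_le_of_one_mem h1 (mem_range_self k) (mem_range_self l),
      fun k => hF.not_diagonal hmove h1 h0 (mem_range_self k),
      fun k => hF.not_antidiagonal hmove (mem_range_self k)⟩
  · exact Or.inr (Or.inr (Or.inl ⟨fun k => hF.upper_le_of_one_mem h1 (hG k) one_ne_zero,
      fun k => hF.lower_lt_of_zero_notMem hmove h0 (hG k) one_ne_zero,
      fun k => hF.topLeft_ne_zero h1 h0 (mem_range_self k)⟩))
  · exact Or.inr (Or.inr (Or.inr (Or.inl ⟨fun k => hF.upper_lt_of_one_notMem hmove h1 (hG k)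
      one_ne_zero, fun k => hF.lower_le_of_zero_mem h0 (hG k) one_ne_zero,
      fun k => hF.bottomRight_ne_zero h0 h1 (mem_range_self k)⟩)))
  · exact Or.inr (Or.inl ⟨fun k => hF.upper_lt_of_one_notMem hmove h1 (hG k) one_ne_zero,
      fun k => hF.lower_lt_of_zero_notMem hmove h0 (hG k) one_ne_zero,
      fun k l => hF.cross_lt_of_one_notMem hmove h1 (mem_range_self k) (mem_range_self l)⟩)
end
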